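/- arXiv:1202.6353 — 3 statements merged into one kernel-verified Lean document; each statement's English description precedes it below -/
import Mathlib

section
/- Let R be a principal Artinian local ring of length n with maximal ideal 𝔪 generated by π, and let T be a free R-module. For every integer 0 ≤ i ≤ n, the map T → T given by x ↦ π^{n−i}·x induces an R-module isomorphism T/𝔪^iT ≅ T[𝔪^i], where T[𝔪^i] = {x ∈ T : 𝔪^i·x = 0}. -/
/-- The length of a module: the Krull dimension of its lattice of submodules. -/
noncomputable def moduleLength (R M : Type*) [Ring R] [AddCommGroup M] [Module R M] : ℕ∞ :=
  WithBot.unbotD 0 (Order.krullDim (Submodule R M))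

/-!
Let `N` be the nilpotency index of `π`. Each ideal `(π^(k+1))` is covered by `(π^k)` for `k < N`,
so `0 = (π^N) ⋖ ⋯ ⋖ (π) ⋖ (π^0) = R` is a composition series and the length `n` of `R` is `N`.
Peeling off one factor `π` at a time (a non-unit is divisible by `π`) shows `c π^k = 0` iff
`π^(n-k) ∣ c`, i.e. `R --π^(n-k)--> R --π^k--> R` is exact. A free module is flat, so this
exactness survives `T ⊗ -`: on `T` the kernel of `π^(n-i)` is `π^i T` and its image is the
kernel of `π^i`.
-/

open IsLocalRing Ideal LinearMap

open scoped Pointwise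

theorem moduleLength_eq_length (R M : Type*) [Ring R] [AddCommGroup M] [Module R M] :
    moduleLength R M = Module.length R M := by
  rw [moduleLength, ← Module.coe_length, WithBot.unbotD_coe]

theorem Module.Flat.ker_smul_eq_range_smul {R M : Type*} [CommRing R] [AddCommGroup M]
    [Module R M] [Module.Flat R M] {a b : R}
    (h : ker (a • LinearMap.id : R →ₗ[R] R) = range (b • LinearMap.id : R →ₗ[R] R)) :
    ker (a • LinearMap.id : M →ₗ[R] M) = range (b • LinearMap.id : M →ₗ[R] M) := by
  have hR := Module.Flat.lTensor_exact M (exact_iff.mpr h)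
  refine exact_iff.mp (Function.Exact.of_ladder_linearEquiv_of_exact
    (e₁ := TensorProduct.rid R M) (e₂ := TensorProduct.rid R M) (e₃ := TensorProduct.rid R M)
    ?_ ?_ hR) <;>
  · ext x
    simp

theorem range_smul_id_eq_span_singleton_smul_top {R M : Type*} [CommRing R] [AddCommGroup M]
    [Module R M] (r : R) :
    range (r • LinearMap.id : M →ₗ[R] M) = span {r} • (⊤ : Submodule R M) := by
  rw [Submodule.ideal_span_singleton_smul, Submodule.pointwise_smul_def, ← LinearMap.range_eq_map]
  rfl

namespace IsLocalRing

variable {R : Type*} [CommRing R] [IsLocalRing R] {π : R}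

theorem dvd_of_not_isUnit (hπ : maximalIdeal R = span {π}) {c : R} (hc : ¬IsUnit c) : π ∣ c := by
  rwa [← mem_span_singleton, ← hπ, mem_maximalIdeal, mem_nonunits_iff]

theorem dvd_of_mul_eq_zero (hπ : maximalIdeal R = span {π}) {c y : R}
    (hy : y ≠ 0) (h : c * y = 0) : π ∣ c :=
  dvd_of_not_isUnit hπ fun hu => hy (hu.mul_right_eq_zero.mp h)

theorem pow_succ_dvd_of_mul_pow_eq_zero (hπ : maximalIdeal R = span {π}) {c : R} {k j : ℕ}
    (hne : π ^ (k + j) ≠ 0) (h : c * π ^ k = 0) : π ^ (j + 1) ∣ c := by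
  induction j generalizing k c with
  | zero => simpa using dvd_of_mul_eq_zero hπ hne h
  | succ j ih =>
    have hk : π ^ k ≠ 0 := fun h0 => hne (pow_eq_zero_of_le (by omega) h0)
    obtain ⟨c, rfl⟩ := dvd_of_mul_eq_zero hπ hk h
    rw [pow_succ']
    refine mul_dvd_mul_left π (ih (k := k + 1) (by rwa [Nat.add_right_comm, add_assoc]) ?_)
    linear_combination h

theorem mul_pow_eq_zero_iff_dvd (hπ : maximalIdeal R = span {π}) (hnil : IsNilpotent π) {k : ℕ}
    (hk : k ≤ nilpotencyClass π) {c : R} :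
    c * π ^ k = 0 ↔ π ^ (nilpotencyClass π - k) ∣ c := by
  constructor
  · intro h
    rcases hk.eq_or_lt with rfl | hlt
    · simp
    have hne : π ^ (k + (nilpotencyClass π - k - 1)) ≠ 0 := by
      rw [show k + (nilpotencyClass π - k - 1) = nilpotencyClass π - 1 by omega]
      exact pow_pred_nilpotencyClass hnil
    simpa [show nilpotencyClass π - k - 1 + 1 = nilpotencyClass π - k by omega] using
      pow_succ_dvd_of_mul_pow_eq_zero hπ hne h
  · rintro ⟨d, rfl⟩
    rw [mul_right_comm, ← pow_add, Nat.sub_add_cancel hk, pow_nilpotencyClass hnil, zero_mul]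

theorem ker_pow_smul_eq_range_pow_smul (hπ : maximalIdeal R = span {π}) (hnil : IsNilpotent π)
    {k : ℕ} (hk : k ≤ nilpotencyClass π) :
    ker (π ^ k • LinearMap.id : R →ₗ[R] R) =
      range (π ^ (nilpotencyClass π - k) • LinearMap.id : R →ₗ[R] R) := by
  ext c
  simp only [mem_ker, mem_range, LinearMap.smul_apply, id_apply, smul_eq_mul]
  rw [mul_comm, mul_pow_eq_zero_iff_dvd hπ hnil hk]
  exact exists_congr fun _ => eq_comm

theorem pow_notMem_span_pow_succ (hπ : maximalIdeal R = span {π}) {k : ℕ} (hk : π ^ k ≠ 0) :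
    π ^ k ∉ span {π ^ (k + 1)} := by
  intro hmem
  obtain ⟨c, hc⟩ := mem_span_singleton'.mp hmem
  have hu : IsUnit (1 - c * π) := by
    refine isUnit_one_sub_self_of_mem_nonunits _ ?_
    rw [← mem_maximalIdeal, hπ]
    exact mul_mem_left _ _ (mem_span_singleton_self π)
  refine hk (hu.mul_left_eq_zero.mp ?_)
  calc π ^ k * (1 - c * π) = π ^ k - c * π ^ (k + 1) := by ring
    _ = 0 := by rw [hc, sub_self]

theorem pow_mem_span_singleton_of_notMem_span_pow_succ (hπ : maximalIdeal R = span {π})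
    {k : ℕ} {x : R} (hx : x ∈ span {π ^ k}) (hx' : x ∉ span {π ^ (k + 1)}) : π ^ k ∈ span {x} := by
  obtain ⟨r, rfl⟩ := mem_span_singleton'.mp hx
  have hr : IsUnit r := by
    by_contra hr
    obtain ⟨s, rfl⟩ := dvd_of_not_isUnit hπ hr
    exact hx' (mem_span_singleton'.mpr ⟨s, by ring⟩)
  exact mem_span_singleton'.mpr ⟨↑hr.unit⁻¹, by rw [← mul_assoc, hr.val_inv_mul, one_mul]⟩

theorem span_pow_succ_covBy (hπ : maximalIdeal R = span {π}) {k : ℕ} (hk : π ^ k ≠ 0) :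
    span {π ^ (k + 1)} ⋖ span {π ^ k} := by
  refine ⟨lt_of_le_of_ne (span_singleton_le_span_singleton.2 (pow_dvd_pow π k.le_succ))
    fun h => pow_notMem_span_pow_succ hπ hk (h ▸ mem_span_singleton_self _), fun J hlt hgt => ?_⟩
  obtain ⟨x, hxJ, hx⟩ := SetLike.exists_of_lt hlt
  refine hgt.not_ge (span_le.mpr (Set.singleton_subset_iff.mpr ?_))
  exact span_le.mpr (Set.singleton_subset_iff.mpr hxJ)
    (pow_mem_span_singleton_of_notMem_span_pow_succ hπ (hgt.le hxJ) hx)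

theorem length_eq_nilpotencyClass (hπ : maximalIdeal R = span {π}) (hnil : IsNilpotent π) :
    Module.length R R = nilpotencyClass π := by
  let s : CompositionSeries (Submodule R R) :=
    { length := nilpotencyClass π
      toFun := fun j => span {π ^ (nilpotencyClass π - j)}
      step := fun j => by
        have hj : nilpotencyClass π - j = nilpotencyClass π - (j + 1) + 1 := by omega
        simp only [Set.mem_ofPred_eq, Fin.val_castSucc, Fin.val_succ, hj]
        exact span_pow_succ_covBy hπ fun h0 =>
          pow_pred_nilpotencyClass hnil (pow_eq_zero_of_le (by omega) h0) }
  refine (Module.length_compositionSeries s ?_ ?_).symm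
  · simp [s, RelSeries.head, pow_nilpotencyClass hnil]
  · simp [s, RelSeries.last]

end IsLocalRing

/-- Over a principal Artinian local ring `R` of length `n` with maximal ideal `𝔪 = (π)`,
for a free `R`-module `T` and `0 ≤ i ≤ n`, multiplication by `π^(n-i)` on `T` has kernel
`𝔪^i T` and image `T[𝔪^i]`; hence it induces an isomorphism `T/𝔪^i T ≅ T[𝔪^i]`. -/
theorem quotient_iso_torsion_of_principal_artinian_local
    {R : Type*} [CommRing R] [IsLocalRing R] [IsArtinianRing R]
    (π : R) (hπ : IsLocalRing.maximalIdeal R = Ideal.span {π})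
    (n : ℕ) (hlen : moduleLength R R = (n : ℕ∞))
    (T : Type*) [AddCommGroup T] [Module R T] [Module.Free R T]
    (i : ℕ) (hi : i ≤ n) :
    LinearMap.ker (π ^ (n - i) • (LinearMap.id : T →ₗ[R] T)) =
      (IsLocalRing.maximalIdeal R) ^ i • (⊤ : Submodule R T) ∧
    LinearMap.range (π ^ (n - i) • (LinearMap.id : T →ₗ[R] T)) =
      Submodule.torsionBySet R T (((IsLocalRing.maximalIdeal R) ^ i : Ideal R) : Set R) := by
  have hnil : IsNilpotent π :=
    Ring.KrullDimLE.isNilpotent_iff_mem_maximalIdeal.mpr (hπ ▸ mem_span_singleton_self π)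
  obtain rfl : n = nilpotencyClass π := by
    exact_mod_cast hlen.symm.trans ((moduleLength_eq_length R R).trans
      (length_eq_nilpotencyClass hπ hnil))
  rw [hπ, span_singleton_pow]
  constructor
  · rw [Module.Flat.ker_smul_eq_range_smul
      (ker_pow_smul_eq_range_pow_smul hπ hnil (Nat.sub_le _ i)), Nat.sub_sub_self hi,
      range_smul_id_eq_span_singleton_smul_top]
  · rw [← Module.Flat.ker_smul_eq_range_smul (ker_pow_smul_eq_range_pow_smul hπ hnil hi)]
    exact (Submodule.torsionBySet_span_singleton_eq _).symm
end

section
/- Let R be a principal Artinian local ring with maximal ideal 𝔪, let C be a nonzero finite-length cyclic R-module, and let i be the largest integer with 𝔪^i·C ≠ 0. If f : C → B is an R-linear map to an R-module B such that f(𝔪^i·C) ≠ 0, then f is injective. Moreover, if C and B are both free R-modules of rank one, then every injective R-linear map f : C → B is an isomorphism. -/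
/-!
Write `𝔪 = (t)`. An element `r ∉ (t^(n+1))` is a unit times `t^k` with `k ≤ n`, so it generates
`t^n` modulo `t^(n+1)`. Hence in a cyclic module `C = R c` killed by `𝔪^(i+1)`, every nonzero
submodule contains `𝔪^i C = R (t^i c)`; if `f(𝔪^i C) ≠ 0` this rules out a nonzero kernel.
Free modules of rank one are isomorphic to `R`, hence Artinian, and an injective endomorphism of
an Artinian module is bijective.
-/

universe v

namespace IsLocalRing

variable {R : Type*} [CommRing R] [IsLocalRing R] {t : R}

theorem pow_mem_span_singleton_sup_of_notMem (ht : maximalIdeal R = Ideal.span {t}) {n : ℕ}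
    {r : R} (hr : r ∉ Ideal.span {t ^ (n + 1)}) :
    t ^ n ∈ Ideal.span {r} ⊔ Ideal.span {t ^ (n + 1)} := by
  induction n generalizing r with
  | zero =>
    have hunit : IsUnit r := by
      rwa [zero_add, pow_one, ← ht, mem_maximalIdeal, mem_nonunits_iff, not_not] at hr
    simp [Ideal.span_singleton_eq_top.mpr hunit]
  | succ n ih =>
    by_cases hunit : IsUnit r
    · simp [Ideal.span_singleton_eq_top.mpr hunit]
    obtain ⟨r, rfl⟩ : ∃ r', r' * t = r := by
      rwa [← Ideal.mem_span_singleton', ← ht, mem_maximalIdeal, mem_nonunits_iff]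
    have hr' : r ∉ Ideal.span {t ^ (n + 1)} := by
      intro h
      obtain ⟨d, rfl⟩ := Ideal.mem_span_singleton'.mp h
      exact hr (Ideal.mem_span_singleton'.mpr ⟨d, by ring⟩)
    obtain ⟨a, b, hb, hab⟩ := Ideal.mem_span_singleton_sup.mp (ih hr')
    obtain ⟨d, rfl⟩ := Ideal.mem_span_singleton'.mp hb
    exact Ideal.mem_span_singleton_sup.mpr
      ⟨a, d * t ^ (n + 2), Ideal.mul_mem_left _ d (Ideal.mem_span_singleton_self _),
        by linear_combination t * hab⟩

variable {M : Type*} [AddCommGroup M] [Module R M]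

theorem pow_smul_mem_span_singleton_smul (ht : maximalIdeal R = Ideal.span {t}) {c : M} {n : ℕ}
    {r : R} (hc : t ^ (n + 1) • c = 0) (hrc : r • c ≠ 0) : t ^ n • c ∈ R ∙ (r • c) := by
  have hr : r ∉ Ideal.span {t ^ (n + 1)} := by
    intro h
    obtain ⟨d, rfl⟩ := Ideal.mem_span_singleton'.mp h
    exact hrc (by rw [mul_smul, hc, smul_zero])
  obtain ⟨a, b, hb, hab⟩ :=
    Ideal.mem_span_singleton_sup.mp (pow_mem_span_singleton_sup_of_notMem ht hr)
  obtain ⟨d, rfl⟩ := Ideal.mem_span_singleton'.mp hb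
  exact Submodule.mem_span_singleton.mpr
    ⟨a, by rw [← hab, add_smul, mul_smul, mul_smul d, hc, smul_zero, add_zero]⟩

theorem maximalIdeal_pow_smul_top_le (ht : maximalIdeal R = Ideal.span {t}) {c : M}
    (hc : R ∙ c = ⊤) {i : ℕ} (hi : maximalIdeal R ^ (i + 1) • (⊤ : Submodule R M) = ⊥)
    {N : Submodule R M} (hN : N ≠ ⊥) : maximalIdeal R ^ i • (⊤ : Submodule R M) ≤ N := by
  have hpow (j : ℕ) : maximalIdeal R ^ j • (⊤ : Submodule R M) = R ∙ (t ^ j • c) := by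
    rw [← hc, ht, Ideal.span_singleton_pow, Submodule.span_smul_span,
      Set.singleton_smul_singleton]
  rw [hpow, Submodule.span_singleton_eq_bot] at hi
  obtain ⟨x, hxN, hx0⟩ := Submodule.exists_mem_ne_zero_of_ne_bot hN
  obtain ⟨r, rfl⟩ := Submodule.mem_span_singleton.mp (hc ▸ Submodule.mem_top : x ∈ R ∙ c)
  rw [hpow, Submodule.span_singleton_le_iff_mem]
  exact (Submodule.span_singleton_le_iff_mem _ _).mpr hxN
    (pow_smul_mem_span_singleton_smul ht hi hx0)

end IsLocalRing

theorem IsArtinian.bijective_of_injective_of_equiv {R M N : Type*} [Ring R] [AddCommGroup M]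
    [Module R M] [AddCommGroup N] [Module R N] [IsArtinian R M] (e : M ≃ₗ[R] N) {f : M →ₗ[R] N}
    (hf : Function.Injective f) : Function.Bijective f := by
  have h := IsArtinian.bijective_of_injective_endomorphism (e.symm.toLinearMap ∘ₗ f)
    (e.symm.injective.comp hf)
  simpa using e.bijective.comp h

/-- Over a principal Artinian local ring `R`: (1) if `C` is a nonzero finite-length cyclic
module and `i` is the largest integer with `𝔪^i C ≠ 0`, then any linear map `f : C → B`
with `f(𝔪^i C) ≠ 0` is injective; (2) any injective linear map between free rank-one
`R`-modules is an isomorphism. -/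
theorem injective_of_nonzero_on_minimal_and_bijective_of_injective
    {R : Type*} [CommRing R] [IsLocalRing R] [IsArtinianRing R]
    (hprin : (IsLocalRing.maximalIdeal R).IsPrincipal) :
    (∀ (C B : Type v) (_ : AddCommGroup C) (_ : Module R C)
        (_ : AddCommGroup B) (_ : Module R B),
      (∃ c : C, Submodule.span R {c} = ⊤) → Nontrivial C → IsFiniteLength R C →
      ∀ i : ℕ,
        (IsLocalRing.maximalIdeal R) ^ i • (⊤ : Submodule R C) ≠ ⊥ →
        (IsLocalRing.maximalIdeal R) ^ (i + 1) • (⊤ : Submodule R C) = ⊥ →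
      ∀ f : C →ₗ[R] B,
        Submodule.map f ((IsLocalRing.maximalIdeal R) ^ i • (⊤ : Submodule R C)) ≠ ⊥ →
        Function.Injective f) ∧
    (∀ (C B : Type v) (_ : AddCommGroup C) (_ : Module R C)
        (_ : AddCommGroup B) (_ : Module R B),
      (Nonempty (Module.Basis (Fin 1) R C)) → (Nonempty (Module.Basis (Fin 1) R B)) →
      ∀ f : C →ₗ[R] B, Function.Injective f → Function.Bijective f) := by
  obtain ⟨t, ht⟩ := hprin
  refine ⟨fun C B _ _ _ _ ⟨c, hc⟩ _ _ i _ hi f hf => ?_, fun C B _ _ _ _ ⟨bC⟩ ⟨bB⟩ f hf => ?_⟩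
  · rw [← LinearMap.ker_eq_bot]
    by_contra hker
    exact hf (LinearMap.le_ker_iff_map.mp (IsLocalRing.maximalIdeal_pow_smul_top_le ht hc hi hker))
  · have : Module.Finite R C := .of_basis bC
    exact IsArtinian.bijective_of_injective_of_equiv (bC.equiv bB (Equiv.refl _)) hf
end

section
/- Given bipartite Euler system data over R satisfying hypotheses (DU) and (LS), every bipartite Euler system of even type is trivial: if (κ_n)_{n ∈ N^even}, (λ_n)_{n ∈ N^odd} is a bipartite Euler system of even type, then λ_n = 0 for every n ∈ N^odd. -/
/-! For odd `n`, the free summand of `Sel n` yields an element with zero annihilator, and (LS)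
gives some `ℓ` at which `loc^unr_ℓ` is injective on its span. Then `loc^unr_ℓ (Sel n)`
contains a copy of `R`, so has length `k`, and (DU) forces `loc^ord_ℓ` to vanish on
`Sel (n ∪ {ℓ})`. The reciprocity law at `ℓ` becomes `R/(λ_n) ≅ H_ord(ℓ) ≅ R`, whence `λ_n = 0`. -/

theorem ENat.eq_zero_of_add_eq_of_le {a b k : ℕ∞} (hk : k ≠ ⊤) (h : a + b = k) (ha : k ≤ a) :
    b = 0 := by
  lift k to ℕ using hk
  lift a to ℕ using ne_top_of_le_ne_top (ENat.natCast_ne_top k) (h ▸ le_self_add)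
  lift b to ℕ using ne_top_of_le_ne_top (ENat.natCast_ne_top k) (h ▸ le_add_self)
  norm_cast at h ha ⊢
  omega

section moduleLength

variable {R M N : Type*} [Ring R] [AddCommGroup M] [Module R M] [AddCommGroup N] [Module R N]

theorem krullDim_submodule_ne_bot : Order.krullDim (Submodule R M) ≠ ⊥ :=
  Order.krullDim_eq_bot_iff.not.mpr (not_isEmpty_of_nonempty _)

theorem moduleLength_le_of_injective (f : M →ₗ[R] N) (hf : Function.Injective f) :
    moduleLength R M ≤ moduleLength R N :=
  WithBot.unbotD_mono krullDim_submodule_ne_bot <| Order.krullDim_le_of_strictMono _ <|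
    (Submodule.map_strictMono_of_injective hf)

theorem subsingleton_of_moduleLength_eq_zero (h : moduleLength R M = 0) : Subsingleton M := by
  rw [moduleLength, WithBot.unbotD_eq_iff] at h
  rw [← Submodule.subsingleton_iff R, ← Order.krullDim_eq_zero_iff_of_orderBot]
  exact_mod_cast h.resolve_right fun h ↦ krullDim_submodule_ne_bot h.1

theorem moduleLength_self_le_of_smul_eq_zero {y : M} (hy : ∀ r : R, r • y = 0 → r = 0) :
    moduleLength R R ≤ moduleLength R M :=
  moduleLength_le_of_injective (LinearMap.toSpanSingleton R M y) <|
    (injective_iff_map_eq_zero _).mpr hy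

end moduleLength

theorem eq_zero_of_quotient_span_singleton_equiv {R N : Type*} [CommRing R] [AddCommGroup N]
    [Module R N] [FaithfulSMul R N] {a : R} (e : (R ⧸ Ideal.span {a}) ≃ₗ[R] N) : a = 0 := by
  have := e.annihilator_eq
  rwa [Ideal.annihilator_quotient, Module.annihilator_eq_bot.mpr ‹_›,
    Ideal.span_singleton_eq_bot] at this

theorem no_nontrivial_even_euler_systems_general
    {R : Type*} [CommRing R] [IsLocalRing R]
    (k : ℕ) (hk : moduleLength R R = (k : ℕ∞))
    {L : Type*} [DecidableEq L]
    (even : Finset L → Prop)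
    (hflip : ∀ (n : Finset L) (ℓ : L), ℓ ∉ n → (even (insert ℓ n) ↔ ¬ even n))
    (Sel : Finset L → Type*) [∀ n, AddCommGroup (Sel n)] [∀ n, Module R (Sel n)]
    (M : Finset L → Type*) [∀ n, AddCommGroup (M n)] [∀ n, Module R (M n)]
    (isoOdd : ∀ n, ¬ even n → Nonempty (Sel n ≃ₗ[R] R × M n × M n))
    (Hunr Hord : L → Type*)
    [∀ ℓ, AddCommGroup (Hunr ℓ)] [∀ ℓ, Module R (Hunr ℓ)]
    [∀ ℓ, AddCommGroup (Hord ℓ)] [∀ ℓ, Module R (Hord ℓ)]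
    (bOrd : ∀ ℓ, Nonempty (Module.Basis (Fin 1) R (Hord ℓ)))
    (locUnr : ∀ (n : Finset L) (ℓ : L), ℓ ∉ n → (Sel n →ₗ[R] Hunr ℓ))
    (locOrd : ∀ (n : Finset L) (ℓ : L), ℓ ∉ n → (Sel (insert ℓ n) →ₗ[R] Hord ℓ))
    -- (DU)
    (hDU : ∀ (n : Finset L) (ℓ : L) (h : ℓ ∉ n),
      moduleLength R (LinearMap.range (locUnr n ℓ h)) +
        moduleLength R (LinearMap.range (locOrd n ℓ h)) = (k : ℕ∞))
    -- (LS)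
    (hLS : ∀ (n : Finset L) (C : Submodule R (Sel n)), C ≠ ⊥ →
      (∃ x : Sel n, C = Submodule.span R {x}) →
      ∃ (ℓ : L) (h : ℓ ∉ n), ∀ x ∈ C, locUnr n ℓ h x = 0 → x = 0)
    -- a bipartite Euler system of even type
    (κ : ∀ n : Finset L, even n → Sel n)
    (lam : ∀ n : Finset L, ¬ even n → R)
    (hrec1 : ∀ (n : Finset L) (hn : ¬ even n) (ℓ : L) (h : ℓ ∉ n)
        (he : even (insert ℓ n)),
      Nonempty ((R ⧸ Ideal.span {lam n hn}) ≃ₗ[R]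
        (Hord ℓ ⧸ Submodule.span R {locOrd n ℓ h (κ (insert ℓ n) he)}))) :
    ∀ (n : Finset L) (hn : ¬ even n), lam n hn = 0 := by
  intro n hn
  obtain ⟨ψ⟩ := isoOdd n hn
  set x : Sel n := ψ.symm (1, 0, 0)
  have hx : ∀ r : R, r • x = 0 → r = 0 := fun r hr ↦ by
    simpa [x, ← map_smul] using congrArg (Prod.fst ∘ ψ) hr
  obtain ⟨ℓ, h, hinj⟩ := hLS n (Submodule.span R {x})
    (by simpa using fun h0 : x = 0 ↦ one_ne_zero (hx 1 (by rw [one_smul, h0])))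
    ⟨x, rfl⟩
  have hunr : (k : ℕ∞) ≤ moduleLength R (LinearMap.range (locUnr n ℓ h)) :=
    hk ▸ moduleLength_self_le_of_smul_eq_zero (y := ⟨_, x, rfl⟩) fun r hr ↦
      hx r (hinj _ (Submodule.smul_mem _ r (Submodule.mem_span_singleton_self x))
        (by simpa using congrArg Subtype.val hr))
  have hord : LinearMap.range (locOrd n ℓ h) = ⊥ :=
    Submodule.subsingleton_iff_eq_bot.mp <| subsingleton_of_moduleLength_eq_zero (R := R) <|
      ENat.eq_zero_of_add_eq_of_le (ENat.natCast_ne_top k) (hDU n ℓ h) hunr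
  have he : even (insert ℓ n) := (hflip n ℓ h).mpr hn
  obtain ⟨e⟩ := hrec1 n hn ℓ h he
  obtain ⟨b⟩ := bOrd ℓ
  have : FaithfulSMul R (Hord ℓ) := .of_injective b.repr.symm b.repr.symm.injective
  have hκ : locOrd n ℓ h (κ _ he) = 0 :=
    (Submodule.mem_bot R).mp (hord ▸ LinearMap.mem_range_self _ _)
  exact eq_zero_of_quotient_span_singleton_equiv
    (e.trans (Submodule.quotEquivOfEqBot _ (Submodule.span_singleton_eq_bot.mpr hκ)))

/-- Given bipartite Euler system data over `R` satisfying (DU) and (LS), every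
bipartite Euler system of even type is trivial: `λ_n = 0` for all `n ∈ N^odd`. -/
theorem no_nontrivial_even_euler_systems
    {R : Type*} [CommRing R] [IsLocalRing R] [IsArtinianRing R]
    (hprin : (IsLocalRing.maximalIdeal R).IsPrincipal)
    (k : ℕ) (hk : moduleLength R R = (k : ℕ∞))
    {L : Type*} [Infinite L] [DecidableEq L]
    (even : Finset L → Prop)
    (hflip : ∀ (n : Finset L) (ℓ : L), ℓ ∉ n → (even (insert ℓ n) ↔ ¬ even n))
    (Sel : Finset L → Type*) [∀ n, AddCommGroup (Sel n)] [∀ n, Module R (Sel n)]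
    (M : Finset L → Type*) [∀ n, AddCommGroup (M n)] [∀ n, Module R (M n)]
    (m : Finset L → ℕ) (hm : ∀ n, moduleLength R (M n) = (m n : ℕ∞))
    (isoEven : ∀ n, even n → Nonempty (Sel n ≃ₗ[R] M n × M n))
    (isoOdd : ∀ n, ¬ even n → Nonempty (Sel n ≃ₗ[R] R × M n × M n))
    (Hunr Hord : L → Type*)
    [∀ ℓ, AddCommGroup (Hunr ℓ)] [∀ ℓ, Module R (Hunr ℓ)]
    [∀ ℓ, AddCommGroup (Hord ℓ)] [∀ ℓ, Module R (Hord ℓ)]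
    (bUnr : ∀ ℓ, Nonempty (Module.Basis (Fin 1) R (Hunr ℓ)))
    (bOrd : ∀ ℓ, Nonempty (Module.Basis (Fin 1) R (Hord ℓ)))
    (locUnr : ∀ (n : Finset L) (ℓ : L), ℓ ∉ n → (Sel n →ₗ[R] Hunr ℓ))
    (locOrd : ∀ (n : Finset L) (ℓ : L), ℓ ∉ n → (Sel (insert ℓ n) →ₗ[R] Hord ℓ))
    -- (DU)
    (hDU : ∀ (n : Finset L) (ℓ : L) (h : ℓ ∉ n),
      moduleLength R (LinearMap.range (locUnr n ℓ h)) +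
        moduleLength R (LinearMap.range (locOrd n ℓ h)) = (k : ℕ∞))
    -- (LS)
    (hLS : ∀ (n : Finset L) (C : Submodule R (Sel n)), C ≠ ⊥ →
      (∃ x : Sel n, C = Submodule.span R {x}) →
      ∃ (ℓ : L) (h : ℓ ∉ n), ∀ x ∈ C, locUnr n ℓ h x = 0 → x = 0)
    -- a bipartite Euler system of even type
    (κ : ∀ n : Finset L, even n → Sel n)
    (lam : ∀ n : Finset L, ¬ even n → R)
    (hrec1 : ∀ (n : Finset L) (hn : ¬ even n) (ℓ : L) (h : ℓ ∉ n)
        (he : even (insert ℓ n)),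
      Nonempty ((R ⧸ Ideal.span {lam n hn}) ≃ₗ[R]
        (Hord ℓ ⧸ Submodule.span R {locOrd n ℓ h (κ (insert ℓ n) he)})))
    (hrec2 : ∀ (n : Finset L) (hn : even n) (ℓ : L) (h : ℓ ∉ n)
        (ho : ¬ even (insert ℓ n)),
      Nonempty ((R ⧸ Ideal.span {lam (insert ℓ n) ho}) ≃ₗ[R]
        (Hunr ℓ ⧸ Submodule.span R {locUnr n ℓ h (κ n hn)}))) :
    ∀ (n : Finset L) (hn : ¬ even n), lam n hn = 0 :=
  no_nontrivial_even_euler_systems_general k hk even hflip Sel M isoOdd Hunr Hord bOrd locUnr locOrd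
    hDU hLS κ lam hrec1
end
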